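/- The Lie algebra A_{3,4}^{-1} is a contraction of sl(2,ℝ). -/
import Mathlib


open Filter Topology

/-- `bg₀` (a bracket on `W`) is a contraction of `bg` (a bracket on `V`). -/
def IsContractionOf {V W : Type*} [AddCommGroup V] [Module ℝ V]
    [AddCommGroup W] [Module ℝ W] [TopologicalSpace W]
    (bg : V → V → V) (bg₀ : W → W → W) : Prop :=
  ∃ I : Set ℝ, (𝓝[I \ {0}] (0 : ℝ)).NeBot ∧
    ∃ C : ℝ → (W ≃ₗ[ℝ] V), ∀ x y : W,
      Tendsto (fun r => (C r).symm (bg (C r x) (C r y))) (𝓝[I \ {0}] (0 : ℝ)) (𝓝 (bg₀ x y))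

/-- The bracket of `sl(2,ℝ)` on `Fin 3 → ℝ`: `[e₁,e₂] = e₁`, `[e₂,e₃] = e₃`,
`[e₁,e₃] = 2e₂`. -/
def sl2Bracket (x y : Fin 3 → ℝ) : Fin 3 → ℝ :=
  ![x 0 * y 1 - x 1 * y 0, 2 * (x 0 * y 2 - x 2 * y 0), x 1 * y 2 - x 2 * y 1]

/-- The bracket of `A_{3,4}^{-1}` on `Fin 3 → ℝ`: `[e₁,e₃] = e₁`, `[e₂,e₃] = -e₂`. -/
def a341Bracket (x y : Fin 3 → ℝ) : Fin 3 → ℝ :=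
  ![x 0 * y 2 - x 2 * y 0, -(x 1 * y 2 - x 2 * y 1), 0]

/-- The contraction maps. -/
noncomputable def contrC (r : ℝ) : (Fin 3 → ℝ) ≃ₗ[ℝ] (Fin 3 → ℝ) :=
  if h : r = 0 then LinearEquiv.refl ℝ _ else
  { toFun := fun x => ![r * x 0, x 2, r * x 1]
    invFun := fun v => ![v 0 / r, v 2 / r, v 1]
    map_add' := by
      intro x y; funext i; fin_cases i <;> simp <;> ring
    map_smul' := by
      intro c x; funext i; fin_cases i <;> simp <;> ring
    left_inv := by
      intro x; funext i; fin_cases i <;> simp <;> field_simp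
    right_inv := by
      intro v; funext i; fin_cases i <;> simp <;> field_simp }

lemma contrC_ne (r : ℝ) (hr : r ≠ 0) (x : Fin 3 → ℝ) :
    contrC r x = ![r * x 0, x 2, r * x 1] := by
  simp [contrC, hr]

lemma contrC_symm_ne (r : ℝ) (hr : r ≠ 0) (v : Fin 3 → ℝ) :
    (contrC r).symm v = ![v 0 / r, v 2 / r, v 1] := by
  rw [LinearEquiv.symm_apply_eq, contrC_ne r hr]
  funext i
  fin_cases i <;> simp <;> field_simp

/-- The Lie algebra `A_{3,4}^{-1}` is a contraction of `sl(2,ℝ)`. -/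
theorem a341_isContractionOf_sl2 : IsContractionOf sl2Bracket a341Bracket := by
  refine ⟨Set.univ, ?_, contrC, ?_⟩
  · have h : Set.univ \ ({0} : Set ℝ) = {(0:ℝ)}ᶜ := by ext z; simp
    rw [h]
    infer_instance
  · intro x y
    have hg : Tendsto (fun r : ℝ =>
        (![x 0 * y 2 - x 2 * y 0, -(x 1 * y 2 - x 2 * y 1),
            2 * r^2 * (x 0 * y 1 - x 1 * y 0)] : Fin 3 → ℝ))
        (𝓝[Set.univ \ {0}] (0 : ℝ)) (𝓝 (a341Bracket x y)) := by
      apply Tendsto.mono_left _ nhdsWithin_le_nhds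
      rw [tendsto_pi_nhds]
      intro i
      fin_cases i
      · simpa [a341Bracket] using tendsto_const_nhds
      · simpa [a341Bracket] using tendsto_const_nhds
      · have h2 : Continuous (fun r : ℝ => 2 * r^2 * (x 0 * y 1 - x 1 * y 0)) := by
          fun_prop
        simpa [a341Bracket] using h2.tendsto 0
    apply hg.congr'
    filter_upwards [self_mem_nhdsWithin] with r hr
    have hr0 : r ≠ 0 := by simpa using hr.2
    rw [contrC_ne r hr0 x, contrC_ne r hr0 y, contrC_symm_ne r hr0]
    funext i
    fin_cases i <;> simp [sl2Bracket] <;> (try field_simp) <;> (try ring)
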